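/- Let f : D → ℂ∪{∞} be meromorphic, γ a simple curve in D ending at e^{iθ}, and c ∈ ℂ∪{∞}. If f is normal along γ (the family {f∘φ_w : w ∈ γ} is normal on D) and f(z) → c as z → e^{iθ} along γ, then f has Δ_γ-boundary value c: C(f, Δ_r γ, e^{iθ}) = {c} for every r ∈ (0,1). -/

import Mathlib

open Complex Set Filter Topology

noncomputable section

def unitDisc : Set ℂ := {z : ℂ | norm z < 1}

def dph (z w : ℂ) : ℝ := norm ((z - w) / (1 - z * (starRingEnd ℂ) w))

def dhyp (z w : ℂ) : ℝ := Real.log ((1 + dph z w) / (1 - dph z w))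

def phiM (w z : ℂ) : ℂ := (z + w) / (1 + z * (starRingEnd ℂ) w)

/-- The spherical (chordal) metric on the Riemann sphere `OnePoint ℂ`. -/
def sphDist : OnePoint ℂ → OnePoint ℂ → ℝ
  | Option.some z, Option.some w =>
      2 * norm (z - w) /
        (Real.sqrt (1 + norm z ^ 2) * Real.sqrt (1 + norm w ^ 2))
  | Option.some z, Option.none => 2 / Real.sqrt (1 + norm z ^ 2)
  | Option.none, Option.some w => 2 / Real.sqrt (1 + norm w ^ 2)
  | Option.none, Option.none => 0

/-- Curvilinear angle along `γ` with pseudo-hyperbolic deflection `r`. -/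
def Delta (r : ℝ) (γ : Set ℂ) : Set ℂ := ⋃ w ∈ γ, {z ∈ unitDisc | dph z w ≤ r}

/-- A simple curve in the unit disc terminating at the boundary point `p`. -/
structure SimpleCurve (p : ℂ) where
  toFun : ℝ → ℂ
  cont : ContinuousOn toFun (Set.Ico 0 1)
  inj : Set.InjOn toFun (Set.Ico 0 1)
  inDisc : ∀ t ∈ Set.Ico (0:ℝ) 1, toFun t ∈ unitDisc
  tends : Filter.Tendsto toFun (nhdsWithin 1 (Set.Ico 0 1)) (nhds p)

def SimpleCurve.carrier {p : ℂ} (γ : SimpleCurve p) : Set ℂ := γ.toFun '' Set.Ico 0 1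

/-- The cluster set of `f` at `p` along the set `A`, w.r.t. the spherical metric. -/
def clusterSet (f : ℂ → OnePoint ℂ) (A : Set ℂ) (p : ℂ) : Set (OnePoint ℂ) :=
  {c | ∃ z : ℕ → ℂ, (∀ n, z n ∈ A) ∧ Filter.Tendsto z Filter.atTop (nhds p) ∧
    Filter.Tendsto (fun n => sphDist (f (z n)) c) Filter.atTop (nhds 0)}

/-- The family `{f ∘ φ_w : w ∈ γ}` is normal on `U`: every sequence admits a subsequence
converging uniformly on compact subsets of `U` in the spherical metric. -/
def NormalAlong (f : ℂ → OnePoint ℂ) (γ : Set ℂ) (U : Set ℂ) : Prop :=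
  ∀ w : ℕ → ℂ, (∀ n, w n ∈ γ) →
    ∃ φ : ℕ → ℕ, StrictMono φ ∧ ∃ h : ℂ → OnePoint ℂ,
      ∀ K : Set ℂ, K ⊆ U → IsCompact K → ∀ ε > 0, ∃ N, ∀ n ≥ N, ∀ z ∈ K,
        sphDist (f (phiM (w (φ n)) z)) (h z) < ε

-- The Riemann-sphere-valued extension of a meromorphic function: at poles the value is ∞.
open scoped Classical in
def toSphere (f : ℂ → ℂ) (z : ℂ) : OnePoint ℂ :=
  if AnalyticAt ℂ f z then (f z : OnePoint ℂ) else (OnePoint.infty : OnePoint ℂ)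

-- The spherical derivative |f'|/(1+|f|²), extended at poles via 1/f.
open scoped Classical in
def sphDeriv (f : ℂ → ℂ) (z : ℂ) : ℝ :=
  if AnalyticAt ℂ f z then norm (deriv f z) / (1 + norm (f z) ^ 2)
  else norm (deriv (fun w => (f w)⁻¹) z) / (1 + norm ((f z)⁻¹) ^ 2)

/-!
Let `z_n → e^{iθ}` inside `Δ_r γ` and pick `w_n ∈ γ` with `d_ph(z_n, w_n) ≤ r`, so that
`z_n = φ_{w_n}(ζ_n)` with `|ζ_n| ≤ r` and, since `|z_n| → 1`, also `w_n → e^{iθ}`. By normality a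
subsequence of `f ∘ φ_{w_n}` converges spherically uniformly on `|ζ| ≤ R` (`r < R < 1`) to a
limit `h`, which is again a holomorphic map into the Riemann sphere. For each `s < R` the arc of
`γ` beyond `w_n` leaves the pseudo-hyperbolic disc of radius `s` about `w_n`, so `φ_{w_n}⁻¹ ∘ γ`
crosses the circle `|ζ| = s` at points where `f` is close to `c`; hence `h = c` on every such
circle, `h ≡ c` by the identity theorem, and `f(z_n) = (f ∘ φ_{w_n})(ζ_n) → c`.

The chordal metric is the Euclidean distance of the images under inverse stereographic
projection, and `w ↦ 1 / w` acts on the sphere as a half-turn; this is how statements about the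
chart at `∞` are reduced to the finite chart.
-/

open OnePoint ComplexConjugate

def invStereo : OnePoint ℂ → EuclideanSpace ℝ (Fin 3)
  | Option.some z => !₂[2 * z.re / (1 + normSq z), 2 * z.im / (1 + normSq z),
      (normSq z - 1) / (1 + normSq z)]
  | Option.none => !₂[0, 0, 1]

lemma EuclideanSpace.dist_sq_fin_three (a b : EuclideanSpace ℝ (Fin 3)) :
    dist a b ^ 2 = (a 0 - b 0) ^ 2 + (a 1 - b 1) ^ 2 + (a 2 - b 2) ^ 2 := by
  rw [EuclideanSpace.dist_eq, Real.sq_sqrt (by positivity), Fin.sum_univ_three]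
  simp [Real.dist_eq, sq_abs]

lemma sphDist_nonneg (x y : OnePoint ℂ) : 0 ≤ sphDist x y := by
  rcases x with _ | z <;> rcases y with _ | w <;> simp only [sphDist] <;> positivity

lemma sphDist_eq_dist (x y : OnePoint ℂ) : sphDist x y = dist (invStereo x) (invStereo y) := by
  rw [← Real.sqrt_sq (sphDist_nonneg x y), ← Real.sqrt_sq dist_nonneg,
    EuclideanSpace.dist_sq_fin_three]
  congr 1
  have hsq : ∀ z : ℂ, Real.sqrt (1 + normSq z) ^ 2 = 1 + normSq z := fun z =>
    Real.sq_sqrt (add_nonneg zero_le_one (normSq_nonneg z))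
  have hpos : ∀ z : ℂ, 0 < 1 + normSq z := fun z =>
    add_pos_of_pos_of_nonneg one_pos (normSq_nonneg z)
  rcases x with _ | z <;> rcases y with _ | w <;>
    simp only [sphDist, invStereo, div_pow, mul_pow, hsq, ← normSq_eq_norm_sq, Fin.isValue,
      Matrix.cons_val_zero, Matrix.cons_val_one, Matrix.cons_val, sub_zero, zero_sub, sub_self,
      even_two, Even.neg_pow]
  · norm_num
  · have := hpos w
    field_simp
    simp only [normSq_apply]; ring
  · have := hpos z
    field_simp
    simp only [normSq_apply]; ring
  · have := hpos z; have := hpos w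
    field_simp
    simp only [normSq_apply, sub_re, sub_im]; ring

@[simp] lemma invStereo_infty : invStereo ∞ = !₂[0, 0, 1] := rfl

lemma invStereo_coe (z : ℂ) : invStereo z =
    !₂[2 * z.re / (1 + normSq z), 2 * z.im / (1 + normSq z), (normSq z - 1) / (1 + normSq z)] := rfl

lemma sphDist_comm (x y : OnePoint ℂ) : sphDist x y = sphDist y x := by
  rw [sphDist_eq_dist, sphDist_eq_dist, dist_comm]

lemma sphDist_triangle (x y z : OnePoint ℂ) : sphDist x z ≤ sphDist x y + sphDist y z := by
  simp only [sphDist_eq_dist]; exact dist_triangle _ _ _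

lemma invStereo_injective : Function.Injective invStereo := by
  intro x y hxy
  have h : sphDist x y = 0 := by rw [sphDist_eq_dist, hxy, dist_self]
  have hs (z : ℂ) : √(1 + ‖z‖ ^ 2) ≠ 0 := by positivity
  induction x using OnePoint.rec <;> induction y using OnePoint.rec <;>
    simp_all [sphDist, sub_eq_zero]

lemma sphDist_pos {x y : OnePoint ℂ} (hxy : x ≠ y) : 0 < sphDist x y := by
  rw [sphDist_eq_dist]; exact dist_pos.2 (invStereo_injective.ne hxy)

lemma ne_infty_of_pos_sphDist_infty {x : OnePoint ℂ} (hx : 0 < sphDist x ∞) : x ≠ ∞ := by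
  rintro rfl; exact hx.ne' rfl

lemma continuous_invStereo_coe : Continuous fun z : ℂ => invStereo z := by
  have h : ∀ z : ℂ, 1 + normSq z ≠ 0 := fun z =>
    (add_pos_of_pos_of_nonneg one_pos (normSq_nonneg z)).ne'
  simp only [invStereo_coe]
  fun_prop (disch := exact h _)

lemma eq_of_tendsto_sphDist {ι : Type*} {l : Filter ι} [l.NeBot] {x : ι → OnePoint ℂ}
    {c c' : OnePoint ℂ} (hc : Tendsto (fun n => sphDist (x n) c) l (𝓝 0))
    (hc' : Tendsto (fun n => sphDist (x n) c') l (𝓝 0)) : c = c' := by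
  simp only [sphDist_eq_dist] at hc hc'
  exact invStereo_injective (tendsto_nhds_unique (tendsto_iff_dist_tendsto_zero.2 hc)
    (tendsto_iff_dist_tendsto_zero.2 hc'))

lemma exists_eq_of_forall_sphDist_lt {h : ℂ → OnePoint ℂ} {K : Set ℂ} (hK : IsCompact K)
    (hh : ContinuousOn (invStereo ∘ h) K) {c : OnePoint ℂ}
    (hc : ∀ ε > 0, ∃ ξ ∈ K, sphDist (h ξ) c < ε) : ∃ ξ ∈ K, h ξ = c := by
  obtain ⟨ξ₀, hξ₀, -⟩ := hc 1 one_pos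
  have hd : ContinuousOn (fun ξ => dist (invStereo (h ξ)) (invStereo c)) K :=
    (continuous_id.dist continuous_const).comp_continuousOn hh
  obtain ⟨ξ, hξ, hmin⟩ := hK.exists_isMinOn ⟨ξ₀, hξ₀⟩ hd
  refine ⟨ξ, hξ, invStereo_injective (dist_le_zero.1 (le_of_forall_pos_lt_add fun ε hε => ?_))⟩
  obtain ⟨ξ', hξ', hlt⟩ := hc ε hε
  rw [sphDist_eq_dist] at hlt
  linarith [isMinOn_iff.1 hmin ξ' hξ']

def sphInv : OnePoint ℂ → OnePoint ℂ
  | Option.some z => if z = 0 then ∞ else ((z⁻¹ : ℂ) : OnePoint ℂ)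
  | Option.none => ((0 : ℂ) : OnePoint ℂ)

@[simp] lemma sphInv_infty : sphInv ∞ = ((0 : ℂ) : OnePoint ℂ) := rfl
@[simp] lemma sphInv_zero : sphInv ((0 : ℂ) : OnePoint ℂ) = ∞ := if_pos rfl
lemma sphInv_coe {z : ℂ} (hz : z ≠ 0) : sphInv z = ((z⁻¹ : ℂ) : OnePoint ℂ) := if_neg hz

lemma sphInv_sphInv (x : OnePoint ℂ) : sphInv (sphInv x) = x := by
  induction x using OnePoint.rec with
  | infty => rw [sphInv_infty, sphInv_zero]
  | coe z =>
    rcases eq_or_ne z 0 with rfl | hz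
    · rw [sphInv_zero, sphInv_infty]
    · rw [sphInv_coe hz, sphInv_coe (inv_ne_zero hz), inv_inv]

def halfTurn (v : EuclideanSpace ℝ (Fin 3)) : EuclideanSpace ℝ (Fin 3) := !₂[v 0, -v 1, -v 2]

lemma isometry_halfTurn : Isometry halfTurn := by
  refine Isometry.of_dist_eq fun a b => ?_
  rw [← Real.sqrt_sq dist_nonneg, EuclideanSpace.dist_sq_fin_three,
    ← Real.sqrt_sq (dist_nonneg (x := a)), EuclideanSpace.dist_sq_fin_three]
  simp only [halfTurn, Fin.isValue, Matrix.cons_val_zero, Matrix.cons_val_one, Matrix.cons_val,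
    sub_neg_eq_add]
  ring_nf

lemma invStereo_sphInv (x : OnePoint ℂ) : invStereo (sphInv x) = halfTurn (invStereo x) := by
  induction x using OnePoint.rec with
  | infty => ext i; fin_cases i <;> simp [invStereo_coe, halfTurn]
  | coe z =>
    rcases eq_or_ne z 0 with rfl | hz
    · ext i; fin_cases i <;> simp [invStereo_coe, halfTurn]
    · have h1 : 0 < 1 + normSq z := add_pos_of_pos_of_nonneg one_pos (normSq_nonneg z)
      have h2 : 0 < normSq z := normSq_pos.2 hz
      rw [sphInv_coe hz]
      ext i; fin_cases i <;>
        simp only [invStereo_coe, halfTurn, inv_re, inv_im, map_inv₀, Fin.zero_eta, Fin.mk_one,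
          Fin.reduceFinMk, Fin.isValue, Matrix.cons_val_zero, Matrix.cons_val_one, Matrix.cons_val] <;>
        field_simp <;> ring

lemma invStereo_comp_sphInv : invStereo ∘ sphInv = halfTurn ∘ invStereo :=
  funext invStereo_sphInv

lemma invStereo_eq_halfTurn (x : OnePoint ℂ) : invStereo x = halfTurn (invStereo (sphInv x)) := by
  rw [← invStereo_sphInv, sphInv_sphInv]

lemma sphInv_comp_sphInv_comp (F : ℂ → OnePoint ℂ) : sphInv ∘ sphInv ∘ F = F := by
  funext z; exact sphInv_sphInv (F z)

def toComplex (x : OnePoint ℂ) : ℂ := x.elim 0 id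

lemma coe_toComplex {x : OnePoint ℂ} (hx : x ≠ ∞) : (toComplex x : OnePoint ℂ) = x := by
  induction x using OnePoint.rec with
  | infty => exact absurd rfl hx
  | coe z => rfl

lemma sphDist_coe_infty (z : ℂ) : sphDist z ∞ = 2 / √(1 + ‖z‖ ^ 2) := rfl

lemma norm_le_of_le_sphDist_infty {z : ℂ} {s : ℝ} (hs : 0 < s) (h : s ≤ sphDist z ∞) :
    ‖z‖ ≤ 2 / s := by
  rw [sphDist_coe_infty, le_div_iff₀ (by positivity)] at h
  rw [le_div_iff₀ hs]
  calc ‖z‖ * s ≤ √(1 + ‖z‖ ^ 2) * s := by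
        gcongr; exact Real.le_sqrt_of_sq_le (by linarith)
    _ ≤ 2 := by linarith

lemma norm_sub_le_sphDist {z w : ℂ} {M : ℝ} (hz : ‖z‖ ≤ M) (hw : ‖w‖ ≤ M) :
    ‖z - w‖ ≤ (1 + M ^ 2) / 2 * sphDist z w := by
  have hsz : √(1 + ‖z‖ ^ 2) ≤ √(1 + M ^ 2) := by gcongr
  have hsw : √(1 + ‖w‖ ^ 2) ≤ √(1 + M ^ 2) := by gcongr
  have hM : √(1 + M ^ 2) * √(1 + M ^ 2) = 1 + M ^ 2 := Real.mul_self_sqrt (by positivity)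
  have hd : sphDist z w = 2 * ‖z - w‖ / (√(1 + ‖z‖ ^ 2) * √(1 + ‖w‖ ^ 2)) := rfl
  rw [hd, ← hM, mul_div_assoc', le_div_iff₀ (by positivity)]
  have := mul_le_mul hsz hsw (by positivity) (by positivity)
  nlinarith [norm_nonneg (z - w)]

def FiniteAnalyticAt (F : ℂ → OnePoint ℂ) (z : ℂ) : Prop :=
  ∃ g : ℂ → ℂ, AnalyticAt ℂ g z ∧ F =ᶠ[𝓝 z] fun w => (g w : OnePoint ℂ)

def SphHolomorphicAt (F : ℂ → OnePoint ℂ) (z : ℂ) : Prop :=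
  FiniteAnalyticAt F z ∨ FiniteAnalyticAt (sphInv ∘ F) z

namespace FiniteAnalyticAt

variable {F : ℂ → OnePoint ℂ} {z : ℂ}

lemma continuousAt (hF : FiniteAnalyticAt F z) : ContinuousAt (invStereo ∘ F) z := by
  obtain ⟨g, hg, hFg⟩ := hF
  exact (continuous_invStereo_coe.continuousAt.comp hg.continuousAt).congr
    (hFg.fun_comp invStereo).symm

lemma analyticAt_toComplex (hF : FiniteAnalyticAt F z) : AnalyticAt ℂ (toComplex ∘ F) z := by
  obtain ⟨g, hg, hFg⟩ := hF
  exact hg.congr (hFg.fun_comp toComplex).symm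

lemma comp {φ : ℂ → ℂ} (hF : FiniteAnalyticAt F (φ z)) (hφ : AnalyticAt ℂ φ z) :
    FiniteAnalyticAt (F ∘ φ) z := by
  obtain ⟨g, hg, hFg⟩ := hF
  exact ⟨g ∘ φ, hg.comp hφ, hFg.comp_tendsto hφ.continuousAt⟩

end FiniteAnalyticAt

namespace SphHolomorphicAt

variable {F : ℂ → OnePoint ℂ} {z : ℂ}

lemma sphInv_comp (hF : SphHolomorphicAt F z) : SphHolomorphicAt (sphInv ∘ F) z := by
  rw [SphHolomorphicAt, sphInv_comp_sphInv_comp]; exact hF.symm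

lemma continuousAt (hF : SphHolomorphicAt F z) : ContinuousAt (invStereo ∘ F) z := by
  rcases hF with hF | hF
  · exact hF.continuousAt
  · have : invStereo ∘ F = halfTurn ∘ (invStereo ∘ sphInv ∘ F) :=
      funext fun w => invStereo_eq_halfTurn (F w)
    rw [this]
    exact isometry_halfTurn.continuous.continuousAt.comp hF.continuousAt

lemma finiteAnalyticAt (hF : SphHolomorphicAt F z) (hz : F z ≠ ∞) : FiniteAnalyticAt F z := by
  rcases hF with hF | ⟨g, hg, hFg⟩
  · exact hF
  have hgz : g z ≠ 0 := by
    intro h0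
    apply hz
    rw [← sphInv_sphInv (F z), show sphInv (F z) = ((0 : ℂ) : OnePoint ℂ) from h0 ▸ hFg.eq_of_nhds,
      sphInv_zero]
  refine ⟨fun w => (g w)⁻¹, hg.inv hgz, ?_⟩
  filter_upwards [hFg, hg.continuousAt.eventually_ne hgz] with w hw hw0
  rw [← sphInv_sphInv (F w), show sphInv (F w) = g w from hw, sphInv_coe hw0]

lemma comp {φ : ℂ → ℂ} (hF : SphHolomorphicAt F (φ z)) (hφ : AnalyticAt ℂ φ z) :
    SphHolomorphicAt (F ∘ φ) z :=
  hF.imp (fun h => h.comp hφ) (fun h => h.comp hφ)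

end SphHolomorphicAt

section UniformLimit

variable {ι : Type*} {l : Filter ι} {F : ι → ℂ → OnePoint ℂ} {h : ℂ → OnePoint ℂ} {U : Set ℂ}

lemma TendstoUniformlyOn.eventually_le_sphDist_infty
    (hFh : TendstoUniformlyOn (fun n => invStereo ∘ F n) (invStereo ∘ h) l U) {s : ℝ} (hs : 0 < s)
    (hh : ∀ z ∈ U, s ≤ sphDist (h z) ∞) : ∀ᶠ n in l, ∀ z ∈ U, s / 2 ≤ sphDist (F n z) ∞ := by
  filter_upwards [Metric.tendstoUniformlyOn_iff.1 hFh (s / 2) (half_pos hs)] with n hn z hz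
  have hd : sphDist (h z) (F n z) < s / 2 := by rw [sphDist_eq_dist]; exact hn z hz
  linarith [sphDist_triangle (h z) (F n z) ∞, hh z hz]

lemma TendstoUniformlyOn.comp_toComplex
    (hFh : TendstoUniformlyOn (fun n => invStereo ∘ F n) (invStereo ∘ h) l U) {s : ℝ} (hs : 0 < s)
    (hh : ∀ z ∈ U, s ≤ sphDist (h z) ∞) :
    TendstoUniformlyOn (fun n => toComplex ∘ F n) (toComplex ∘ h) l U := by
  set C := (1 + (4 / s) ^ 2) / 2
  have hC : 0 < C := by positivity
  rw [Metric.tendstoUniformlyOn_iff]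
  intro ε hε
  filter_upwards [hFh.eventually_le_sphDist_infty hs hh,
    Metric.tendstoUniformlyOn_iff.1 hFh (ε / C) (by positivity)] with n hFn hn z hz
  have hbound : ∀ x : OnePoint ℂ, s / 2 ≤ sphDist x ∞ → ‖toComplex x‖ ≤ 4 / s := by
    intro x hx
    rw [← coe_toComplex (x := x) (ne_infty_of_pos_sphDist_infty (by linarith))] at hx
    have := norm_le_of_le_sphDist_infty (half_pos hs) hx
    rwa [div_div_eq_mul_div, show 2 * 2 = (4 : ℝ) by norm_num] at this
  have hhz : s / 2 ≤ sphDist (h z) ∞ := by linarith [hh z hz]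
  calc dist ((toComplex ∘ h) z) ((toComplex ∘ F n) z)
      ≤ C * sphDist (toComplex (h z)) (toComplex (F n z)) :=
        (dist_eq_norm _ _).trans_le (norm_sub_le_sphDist (hbound _ hhz) (hbound _ (hFn z hz)))
    _ < C * (ε / C) := by
        rw [coe_toComplex (x := h z) (ne_infty_of_pos_sphDist_infty (by linarith)),
          coe_toComplex (x := F n z) (ne_infty_of_pos_sphDist_infty (by linarith [hFn z hz])),
          sphDist_eq_dist]
        exact mul_lt_mul_of_pos_left (hn z hz) hC
    _ = ε := mul_div_cancel₀ ε hC.ne'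

end UniformLimit

section NormalLimit

variable {F : ℕ → ℂ → OnePoint ℂ} {h : ℂ → OnePoint ℂ} {U : Set ℂ}

lemma finiteAnalyticAt_of_tendstoUniformlyOn (hU : IsOpen U)
    (hFh : TendstoUniformlyOn (fun n => invStereo ∘ F n) (invStereo ∘ h) atTop U)
    (hF : ∀ n, ∀ z ∈ U, SphHolomorphicAt (F n) z) {z₀ : ℂ} (hz₀ : z₀ ∈ U) (hfin : h z₀ ≠ ∞) :
    FiniteAnalyticAt h z₀ := by
  have hh : ContinuousAt (invStereo ∘ h) z₀ :=
    (hFh.continuousOn (Frequently.of_forall fun n z hz =>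
      (hF n z hz).continuousAt.continuousWithinAt)).continuousAt (hU.mem_nhds hz₀)
  set η := sphDist (h z₀) ∞
  have hη : 0 < η := sphDist_pos hfin
  obtain ⟨ρ, hρ, hρU⟩ : ∃ ρ > 0, ∀ z ∈ Metric.ball z₀ ρ, z ∈ U ∧ η / 2 ≤ sphDist (h z) ∞ := by
    have hnear : ∀ᶠ z in 𝓝 z₀, sphDist (h z) (h z₀) < η / 2 := by
      simpa only [sphDist_eq_dist, Function.comp_apply] using
        (Metric.continuousAt_iff'.1 hh) (η / 2) (half_pos hη)
    obtain ⟨ρ, hρ, hsub⟩ := Metric.eventually_nhds_iff_ball.1 ((hU.eventually_mem hz₀).and hnear)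
    refine ⟨ρ, hρ, fun z hz => ⟨(hsub z hz).1, ?_⟩⟩
    linarith [sphDist_triangle (h z₀) (h z) ∞, sphDist_comm (h z₀) (h z), (hsub z hz).2]
  have hBU : Metric.ball z₀ ρ ⊆ U := fun z hz => (hρU z hz).1
  have hfar : ∀ z ∈ Metric.ball z₀ ρ, η / 2 ≤ sphDist (h z) ∞ := fun z hz => (hρU z hz).2
  have hFhB := hFh.mono hBU
  have hdiff : ∀ᶠ n in atTop, DifferentiableOn ℂ (toComplex ∘ F n) (Metric.ball z₀ ρ) := by
    filter_upwards [hFhB.eventually_le_sphDist_infty (half_pos hη) hfar] with n hn z hz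
    have hFz : F n z ≠ ∞ := ne_infty_of_pos_sphDist_infty (by linarith [hn z hz])
    exact ((hF n z (hBU hz)).finiteAnalyticAt hFz).analyticAt_toComplex.differentiableAt
      |>.differentiableWithinAt
  have hg : DifferentiableOn ℂ (toComplex ∘ h) (Metric.ball z₀ ρ) :=
    (hFhB.comp_toComplex (half_pos hη) hfar).tendstoLocallyUniformlyOn.differentiableOn hdiff
      Metric.isOpen_ball
  refine ⟨toComplex ∘ h, hg.analyticAt (Metric.ball_mem_nhds z₀ hρ), ?_⟩
  filter_upwards [Metric.ball_mem_nhds z₀ hρ] with z hz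
  exact (coe_toComplex (ne_infty_of_pos_sphDist_infty (by linarith [hfar z hz]))).symm

lemma sphHolomorphicAt_of_tendstoUniformlyOn (hU : IsOpen U)
    (hFh : TendstoUniformlyOn (fun n => invStereo ∘ F n) (invStereo ∘ h) atTop U)
    (hF : ∀ n, ∀ z ∈ U, SphHolomorphicAt (F n) z) {z₀ : ℂ} (hz₀ : z₀ ∈ U) :
    SphHolomorphicAt h z₀ := by
  by_cases hfin : h z₀ = ∞
  · have hFh' : TendstoUniformlyOn (fun n => invStereo ∘ (sphInv ∘ F n))
        (invStereo ∘ (sphInv ∘ h)) atTop U := by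
      simpa only [← Function.comp_assoc, invStereo_comp_sphInv] using
        isometry_halfTurn.uniformContinuous.comp_tendstoUniformlyOn hFh
    refine Or.inr (finiteAnalyticAt_of_tendstoUniformlyOn hU hFh'
      (fun n z hz => (hF n z hz).sphInv_comp) hz₀ ?_)
    simp [hfin]
  · exact Or.inl (finiteAnalyticAt_of_tendstoUniformlyOn hU hFh hF hz₀ hfin)

end NormalLimit

namespace SphHolomorphicAt

variable {F : ℂ → OnePoint ℂ} {z : ℂ}

lemma eq_of_frequently_eq (hF : SphHolomorphicAt F z) {c : OnePoint ℂ}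
    (hc : ∃ᶠ w in 𝓝[≠] z, F w = c) : F z = c :=
  invStereo_injective <| tendsto_nhds_unique_of_frequently_eq
    (hF.continuousAt.tendsto.mono_left nhdsWithin_le_nhds) tendsto_const_nhds
    (hc.mono fun _ hw => congrArg invStereo hw)

lemma eventually_eq_coe_of_frequently_eq (hF : SphHolomorphicAt F z) {c : ℂ}
    (hc : ∃ᶠ w in 𝓝[≠] z, F w = c) : ∀ᶠ w in 𝓝 z, F w = c := by
  have hFz := hF.eq_of_frequently_eq hc
  obtain ⟨g, hg, hFg⟩ := hF.finiteAnalyticAt (hFz ▸ coe_ne_infty c)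
  have hgc : ∃ᶠ w in 𝓝[≠] z, g w = c :=
    (hc.and_eventually (hFg.filter_mono nhdsWithin_le_nhds)).mono fun w hw =>
      coe_injective (hw.2.symm.trans hw.1)
  filter_upwards [(hg.frequently_eq_iff_eventually_eq analyticAt_const).1 hgc, hFg] with w hw hFw
  rw [hFw, hw]

lemma eventually_eq_of_frequently_eq (hF : SphHolomorphicAt F z) {c : OnePoint ℂ}
    (hc : ∃ᶠ w in 𝓝[≠] z, F w = c) : ∀ᶠ w in 𝓝 z, F w = c := by
  induction c using OnePoint.rec with
  | coe c => exact hF.eventually_eq_coe_of_frequently_eq hc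
  | infty =>
    have h0 := hF.sphInv_comp.eventually_eq_coe_of_frequently_eq (c := 0)
      (hc.mono fun w hw => by simp [hw])
    filter_upwards [h0] with w hw
    rw [← sphInv_sphInv (F w), show sphInv (F w) = ((0 : ℂ) : OnePoint ℂ) from hw, sphInv_zero]

end SphHolomorphicAt

lemma eqOn_of_sphHolomorphicAt_of_frequently_eq {F : ℂ → OnePoint ℂ} {U : Set ℂ}
    (hU : IsPreconnected U) (hF : ∀ z ∈ U, SphHolomorphicAt F z) {z₀ : ℂ} (hz₀ : z₀ ∈ U)
    {c : OnePoint ℂ} (hc : ∃ᶠ w in 𝓝[≠] z₀, F w = c) : ∀ z ∈ U, F z = c := by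
  set V := {z | ∀ᶠ w in 𝓝 z, F w = c}
  suffices hUV : U ⊆ V from fun z hz => (hUV hz).self_of_nhds
  refine hU.subset_of_closure_inter_subset isOpen_setOfPred_eventually_nhds
    ⟨z₀, hz₀, (hF z₀ hz₀).eventually_eq_of_frequently_eq hc⟩ ?_
  rintro z ⟨hzV, hzU⟩
  by_contra hz
  have hfreq : ∃ᶠ w in 𝓝[≠] z, w ∈ V :=
    mem_closure_ne_iff_frequently_within.1 (by rwa [sdiff_singleton_eq_self hz])
  exact hz ((hF z hzU).eventually_eq_of_frequently_eq (hfreq.mono fun w hw => hw.self_of_nhds))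

lemma frequently_nhdsNE_zero_of_forall_norm_eq {P : ℂ → Prop} {R : ℝ} (hR : 0 < R)
    (hP : ∀ s ∈ Ioo 0 R, ∃ ξ, ‖ξ‖ = s ∧ P ξ) : ∃ᶠ ξ in 𝓝[≠] 0, P ξ := by
  refine Metric.nhdsWithin_basis_ball.frequently_iff.2 fun ε hε => ?_
  obtain ⟨ξ, hξs, hξ⟩ := hP (min (ε / 2) (R / 2))
    ⟨lt_min (half_pos hε) (half_pos hR), (min_le_right _ _).trans_lt (half_lt_self hR)⟩
  refine ⟨ξ, ⟨mem_ball_zero_iff.2 ?_, ?_⟩, hξ⟩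
  · rw [hξs]; exact (min_le_left _ _).trans_lt (half_lt_self hε)
  · rw [mem_compl_singleton_iff, ← norm_ne_zero_iff, hξs]
    exact (lt_min (half_pos hε) (half_pos hR)).ne'

section Mobius

variable {z w : ℂ}

lemma normSq_one_add_mul_conj_sub_normSq_add (z w : ℂ) :
    normSq (1 + z * conj w) - normSq (z + w) = (1 - normSq z) * (1 - normSq w) := by
  simp only [normSq_apply, add_re, add_im, mul_re, mul_im, one_re, one_im, conj_re, conj_im]
  ring

lemma one_add_mul_conj_ne_zero (hz : ‖z‖ < 1) (hw : ‖w‖ < 1) : 1 + z * conj w ≠ 0 := by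
  intro h
  have : ‖z * conj w‖ = 1 := by rw [eq_neg_of_add_eq_zero_right h, norm_neg, norm_one]
  rw [norm_mul, norm_conj] at this
  nlinarith [norm_nonneg z, norm_nonneg w]

lemma one_sub_mul_conj_ne_zero (hz : ‖z‖ < 1) (hw : ‖w‖ < 1) : 1 - z * conj w ≠ 0 := by
  simpa [sub_eq_add_neg] using one_add_mul_conj_ne_zero hz (w := -w) (by rwa [norm_neg])

lemma norm_phiM_lt_one (hz : ‖z‖ < 1) (hw : ‖w‖ < 1) : ‖phiM w z‖ < 1 := by
  rw [phiM, norm_div, div_lt_one (norm_pos_iff.2 (one_add_mul_conj_ne_zero hz hw)),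
    ← pow_lt_pow_iff_left₀ (norm_nonneg _) (norm_nonneg _) two_ne_zero, Complex.sq_norm,
    Complex.sq_norm]
  have h := normSq_one_add_mul_conj_sub_normSq_add z w
  rw [← Complex.sq_norm z, ← Complex.sq_norm w] at h
  nlinarith [mul_pos (sub_pos.2 (pow_lt_one₀ (norm_nonneg z) hz two_ne_zero))
    (sub_pos.2 (pow_lt_one₀ (norm_nonneg w) hw two_ne_zero))]

lemma dph_eq_norm_phiM_neg (z w : ℂ) : dph z w = ‖phiM (-w) z‖ := by
  simp only [dph, phiM, map_neg, mul_neg, ← sub_eq_add_neg]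

lemma dph_nonneg (z w : ℂ) : 0 ≤ dph z w := norm_nonneg _

@[simp] lemma dph_self (z : ℂ) : dph z z = 0 := by simp [dph]

lemma phiM_phiM_neg (hz : ‖z‖ < 1) (hw : ‖w‖ < 1) : phiM w (phiM (-w) z) = z := by
  have h1 := one_add_mul_conj_ne_zero hz (norm_neg w ▸ hw)
  have h2 := one_add_mul_conj_ne_zero (norm_neg w ▸ hw) hw
  simp only [phiM, map_neg, mul_neg] at h1 h2 ⊢
  rw [div_add' _ _ _ h1, div_mul_eq_mul_div, one_add_div h1, div_div_div_cancel_right₀ h1]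
  rw [div_eq_iff (by contrapose! h2; linear_combination h2)]
  ring

lemma eq_of_phiM_eq {ζ w₁ w₂ : ℂ} (hζ : ‖ζ‖ < 1) (h₁ : ‖w₁‖ < 1) (h₂ : ‖w₂‖ < 1)
    (h : phiM w₁ ζ = phiM w₂ ζ) : w₁ = w₂ := by
  set a := phiM w₁ ζ
  have e₁ : ζ + w₁ = a * (1 + ζ * conj w₁) := by
    simp only [a, phiM]; field_simp [one_add_mul_conj_ne_zero hζ h₁]
  have e₂ : ζ + w₂ = a * (1 + ζ * conj w₂) := by
    rw [h]; simp only [phiM]; field_simp [one_add_mul_conj_ne_zero hζ h₂]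
  have e : w₁ - w₂ = a * ζ * conj (w₁ - w₂) := by rw [map_sub]; linear_combination e₁ - e₂
  have hn : ‖w₁ - w₂‖ = ‖a‖ * ‖ζ‖ * ‖w₁ - w₂‖ := by
    conv_lhs => rw [e]
    rw [norm_mul, norm_mul, norm_conj]
  have ha : ‖a‖ * ‖ζ‖ < 1 := by
    nlinarith [norm_nonneg ζ, norm_nonneg a, norm_phiM_lt_one hζ h₁]
  have : ‖w₁ - w₂‖ = 0 := by nlinarith [norm_nonneg (w₁ - w₂)]
  exact sub_eq_zero.1 (norm_eq_zero.1 this)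

lemma norm_sub_le_of_dph_le {r : ℝ} (hz : ‖z‖ < 1) (hw : ‖w‖ < 1) (hr : r < 1)
    (h : dph z w ≤ r) : ‖z - w‖ ≤ r * (1 - ‖z‖ ^ 2) / (1 - r) := by
  have hd := one_sub_mul_conj_ne_zero hz hw
  have hr0 : 0 ≤ r := (norm_nonneg _).trans h
  have h1 : ‖z - w‖ ≤ r * ‖1 - z * conj w‖ := by
    rwa [dph, norm_div, div_le_iff₀ (norm_pos_iff.2 hd)] at h
  have h2 : ‖1 - z * conj w‖ ≤ (1 - ‖z‖ ^ 2) + ‖z‖ * ‖z - w‖ := by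
    have : 1 - z * conj w = ((1 - ‖z‖ ^ 2 : ℝ) : ℂ) + z * conj (z - w) := by
      rw [map_sub, mul_sub, mul_conj, ← Complex.sq_norm]; push_cast; ring
    rw [this]
    refine (norm_add_le _ _).trans_eq ?_
    rw [norm_real, Real.norm_of_nonneg (by nlinarith [norm_nonneg z]), norm_mul, norm_conj]
  have h3 : r * (‖z‖ * ‖z - w‖) ≤ r * ‖z - w‖ :=
    mul_le_mul_of_nonneg_left (mul_le_of_le_one_left (norm_nonneg _) hz.le) hr0
  rw [le_div_iff₀ (by linarith)]
  nlinarith [mul_le_mul_of_nonneg_left h2 hr0]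

lemma one_sub_dph_sq_le (hz : ‖z‖ < 1) (hw : ‖w‖ < 1) :
    1 - dph z w ^ 2 ≤ (1 - ‖z‖ ^ 2) * (1 + ‖w‖) / (1 - ‖w‖) := by
  have hd := one_sub_mul_conj_ne_zero hz hw
  have hlow : 1 - ‖w‖ ≤ ‖1 - z * conj w‖ := by
    have := norm_sub_norm_le (1 : ℂ) (z * conj w)
    rw [norm_one, norm_mul, norm_conj] at this
    nlinarith [norm_nonneg z, norm_nonneg w]
  have key : 1 - dph z w ^ 2 = (1 - ‖z‖ ^ 2) * (1 - ‖w‖ ^ 2) / ‖1 - z * conj w‖ ^ 2 := by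
    have h := normSq_one_add_mul_conj_sub_normSq_add z (-w)
    simp only [map_neg, mul_neg, ← sub_eq_add_neg, normSq_neg] at h
    simp only [dph, norm_div, div_pow, Complex.sq_norm]
    rw [← h, sub_div, div_self (normSq_pos.2 hd).ne']
  have hw1 : 0 < 1 - ‖w‖ := by linarith
  rw [key, div_le_div_iff₀ (by positivity) hw1]
  have hz1 : 0 ≤ 1 - ‖z‖ ^ 2 := by nlinarith [norm_nonneg z]
  have : (1 - ‖w‖) ^ 2 ≤ ‖1 - z * conj w‖ ^ 2 := pow_le_pow_left₀ hw1.le hlow 2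
  nlinarith [mul_le_mul_of_nonneg_left this (mul_nonneg hz1 (by positivity : (0:ℝ) ≤ 1 + ‖w‖))]

lemma analyticAt_phiM (hz : ‖z‖ < 1) (hw : ‖w‖ < 1) : AnalyticAt ℂ (phiM w) z := by
  unfold phiM
  exact (by fun_prop : AnalyticAt ℂ _ z).div (by fun_prop) (one_add_mul_conj_ne_zero hz hw)

lemma continuousAt_phiM_uncurry (hz : ‖z‖ < 1) (hw : ‖w‖ < 1) :
    ContinuousAt (fun q : ℂ × ℂ => phiM q.1 q.2) (w, z) := by
  unfold phiM
  exact (by fun_prop : ContinuousAt _ _).div (by fun_prop) (one_add_mul_conj_ne_zero hz hw)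

lemma tendsto_of_dph_le {z w : ℕ → ℂ} {p : ℂ} (hp : ‖p‖ = 1) (hz : Tendsto z atTop (𝓝 p))
    (hzD : ∀ n, ‖z n‖ < 1) (hwD : ∀ n, ‖w n‖ < 1) {r : ℝ} (hr : r < 1)
    (h : ∀ n, dph (z n) (w n) ≤ r) : Tendsto w atTop (𝓝 p) := by
  have hbound : Tendsto (fun n => r * (1 - ‖z n‖ ^ 2) / (1 - r)) atTop (𝓝 0) := by
    simpa [hp] using ((hz.norm.pow 2).const_sub 1).const_mul r |>.div_const (1 - r)
  have hzw : Tendsto (fun n => z n - w n) atTop (𝓝 0) :=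
    squeeze_zero_norm (fun n => norm_sub_le_of_dph_le (hzD n) (hwD n) hr (h n)) hbound
  simpa using hz.sub hzw

lemma closedBall_subset_unitDisc {R : ℝ} (hR : R < 1) : Metric.closedBall (0 : ℂ) R ⊆ unitDisc :=
  fun _ hz => (mem_closedBall_zero_iff.1 hz).trans_lt hR

lemma exists_frequently_phiM_phiM_neg {V : ℕ → ℂ} {v₀ a : ℂ} (hV : Tendsto V atTop (𝓝 v₀))
    (hVD : ∀ n, ‖V n‖ < 1) (hv₀ : ‖v₀‖ < 1) (hne : ∀ n, V n ≠ v₀) (ha : ‖a‖ < 1) :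
    ∃ R < 1, ∀ N : ℕ, ∃ᶠ x in 𝓝[≠] a, ∃ m ≥ N, ∃ n ≥ N,
      ‖phiM (-V m) a‖ ≤ R ∧ x = phiM (V n) (phiM (-V m) a) := by
  set ζ₀ := phiM (-v₀) a
  have hζ₀ : ‖ζ₀‖ < 1 := norm_phiM_lt_one ha (by rwa [norm_neg])
  have hζ : Tendsto (fun m => phiM (-V m) a) atTop (𝓝 ζ₀) :=
    (continuousAt_phiM_uncurry ha (by rwa [norm_neg])).tendsto.comp
      (hV.neg.prodMk_nhds tendsto_const_nhds)
  have hjoint : Tendsto (fun q : ℕ × ℕ => phiM (V q.1) (phiM (-V q.2) a)) atTop (𝓝 a) := by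
    have := (continuousAt_phiM_uncurry hζ₀ hv₀).tendsto.comp
      ((hV.comp tendsto_fst).prodMk_nhds (hζ.comp tendsto_snd))
    rwa [phiM_phiM_neg ha hv₀, prod_atTop_atTop_eq] at this
  refine ⟨(‖ζ₀‖ + 1) / 2, by linarith, fun N => frequently_iff.2 fun {U} hU => ?_⟩
  obtain ⟨M, hM⟩ :=
    eventually_atTop_prod_self.1 (hjoint.eventually (eventually_nhdsWithin_iff.1 hU))
  obtain ⟨M', hM'⟩ := eventually_atTop.1
    (hζ.norm.eventually (gt_mem_nhds (by linarith : ‖ζ₀‖ < (‖ζ₀‖ + 1) / 2)))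
  set m := max N (max M M')
  obtain ⟨n, hn, hVn⟩ := ((eventually_ge_atTop m).and (hV.eventually_ne (hne m).symm)).exists
  have hζm : ‖phiM (-V m) a‖ < 1 := norm_phiM_lt_one ha (by rw [norm_neg]; exact hVD m)
  refine ⟨_, hM n m ((le_max_left _ _).trans ((le_max_right _ _).trans hn))
    ((le_max_left _ _).trans (le_max_right _ _)) fun h => hVn ?_,
    m, le_max_left _ _, n, (le_max_left _ _).trans hn,
    (hM' m ((le_max_right _ _).trans (le_max_right _ _))).le, rfl⟩
  exact eq_of_phiM_eq hζm (hVD n) (hVD m) (h.trans (phiM_phiM_neg ha (hVD m)).symm)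

end Mobius

lemma mem_Delta {r : ℝ} {S : Set ℂ} {z : ℂ} :
    z ∈ Delta r S ↔ z ∈ unitDisc ∧ ∃ w ∈ S, dph z w ≤ r := by
  simp [Delta]

instance : (𝓝[Ico (0 : ℝ) 1] 1).NeBot := by
  rw [nhdsWithin_Ico_eq_nhdsLT zero_lt_one]; infer_instance

lemma one_div_nat_add_one_mem_Ioc (n : ℕ) : 1 / ((n : ℝ) + 1) ∈ Ioc (0 : ℝ) 1 :=
  ⟨Nat.one_div_pos_of_nat, div_le_one_of_le₀ (by linarith [n.cast_nonneg (α := ℝ)]) (by positivity)⟩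

namespace SimpleCurve

variable {p : ℂ} (γ : SimpleCurve p)

lemma norm_lt_one {t : ℝ} (ht : t ∈ Ico (0 : ℝ) 1) : ‖γ.toFun t‖ < 1 := γ.inDisc t ht

lemma tendsto_norm (hp : ‖p‖ = 1) :
    Tendsto (fun t => ‖γ.toFun t‖) (𝓝[Ico 0 1] 1) (𝓝 1) :=
  hp ▸ γ.tends.norm

lemma tendsto_one_of_tendsto (hp : ‖p‖ = 1) {T : ℕ → ℝ} (hT : ∀ n, T n ∈ Ico (0 : ℝ) 1)
    (hγT : Tendsto (fun n => γ.toFun (T n)) atTop (𝓝 p)) : Tendsto T atTop (𝓝 1) := by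
  refine tendsto_order.2
    ⟨fun a ha => ?_, fun a ha => Eventually.of_forall fun n => (hT n).2.trans ha⟩
  have hsub : Icc 0 a ⊆ Ico (0 : ℝ) 1 := fun t ht => ⟨ht.1, ht.2.trans_lt ha⟩
  have hK : IsCompact (γ.toFun '' Icc 0 a) := isCompact_Icc.image_of_continuousOn (γ.cont.mono hsub)
  have hp : p ∉ γ.toFun '' Icc 0 a := by
    rintro ⟨t, ht, hγt⟩; exact (γ.norm_lt_one (hsub ht)).ne (by rw [hγt, hp])
  filter_upwards [hγT.eventually (hK.isClosed.isOpen_compl.mem_nhds hp)] with n hn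
  by_contra! hna
  exact hn ⟨T n, ⟨(hT n).1, hna⟩, rfl⟩

lemma exists_dph_eq (hp : ‖p‖ = 1) {t₀ : ℝ} (ht₀ : t₀ ∈ Ico (0 : ℝ) 1) {s : ℝ} (hs0 : 0 ≤ s)
    (hs1 : s < 1) : ∃ τ ∈ Ico t₀ 1, dph (γ.toFun τ) (γ.toFun t₀) = s := by
  set w := γ.toFun t₀
  have hw := γ.norm_lt_one ht₀
  have hbound : Tendsto (fun t => (1 - ‖γ.toFun t‖ ^ 2) * (1 + ‖w‖) / (1 - ‖w‖))
      (𝓝[Ico 0 1] 1) (𝓝 0) := by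
    simpa using (((γ.tendsto_norm hp).pow 2).const_sub 1).mul_const (1 + ‖w‖) |>.div_const (1 - ‖w‖)
  obtain ⟨τ', hτ'bound, hτ't₀, hτ'⟩ :=
    ((hbound.eventually_lt_const (by nlinarith : 0 < 1 - s ^ 2)).and
      ((lt_mem_nhds ht₀.2).filter_mono nhdsWithin_le_nhds |>.and self_mem_nhdsWithin)).exists
  have hsub : Icc t₀ τ' ⊆ Ico (0 : ℝ) 1 := fun t ht => ⟨ht₀.1.trans ht.1, ht.2.trans_lt hτ'.2⟩
  have hlt : s < dph (γ.toFun τ') w := by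
    have := one_sub_dph_sq_le (w := w) (γ.norm_lt_one hτ') hw
    nlinarith [dph_nonneg (γ.toFun τ') w]
  have hcont : ContinuousOn (fun t => dph (γ.toFun t) w) (Icc t₀ τ') := by
    refine continuous_norm.comp_continuousOn (ContinuousOn.div ?_ ?_ fun t ht => ?_)
    · exact (γ.cont.mono hsub).sub continuousOn_const
    · exact continuousOn_const.sub ((γ.cont.mono hsub).mul continuousOn_const)
    · exact one_sub_mul_conj_ne_zero (γ.norm_lt_one (hsub ht)) hw
  obtain ⟨τ, hτ, hτs⟩ := intermediate_value_Icc hτ't₀.le hcont ⟨by simpa [w] using hs0, hlt.le⟩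
  exact ⟨τ, ⟨hτ.1, (hsub hτ).2⟩, hτs⟩

lemma exists_seq_tendsto_ne : ∃ v : ℕ → ℂ, ∃ v₀ : ℂ, (∀ n, v n ∈ γ.carrier ∧ ‖v n‖ < 1) ∧
    ‖v₀‖ < 1 ∧ Tendsto v atTop (𝓝 v₀) ∧ ∀ n, v n ≠ v₀ := by
  set t : ℕ → ℝ := fun n => 1 / ((n : ℝ) + 1) / 2
  have ht : ∀ n, t n ∈ Ico (0 : ℝ) 1 := fun n =>
    ⟨by positivity, by simp only [t]; linarith [(one_div_nat_add_one_mem_Ioc n).2]⟩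
  have h0 : (0 : ℝ) ∈ Ico (0 : ℝ) 1 := ⟨le_rfl, one_pos⟩
  have htlim : Tendsto t atTop (𝓝[Ico 0 1] 0) := tendsto_nhdsWithin_iff.2
    ⟨by simpa [t] using tendsto_one_div_add_atTop_nhds_zero_nat.div_const (2 : ℝ),
      Eventually.of_forall ht⟩
  refine ⟨fun n => γ.toFun (t n), γ.toFun 0, fun n => ⟨⟨t n, ht n, rfl⟩, γ.norm_lt_one (ht n)⟩,
    γ.norm_lt_one h0, (γ.cont 0 h0).tendsto.comp htlim, fun n hn => ?_⟩
  exact (show 0 < t n by positivity).ne' (γ.inj (ht n) h0 hn)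

lemma mem_clusterSet {F : ℂ → OnePoint ℂ} {c : OnePoint ℂ}
    (hlim : Tendsto (fun t => sphDist (F (γ.toFun t)) c) (𝓝[Ico 0 1] 1) (𝓝 0)) {r : ℝ}
    (hr : 0 ≤ r) : c ∈ clusterSet F (Delta r γ.carrier) p := by
  set u : ℕ → ℝ := fun n => 1 - 1 / ((n : ℝ) + 1)
  have hu : ∀ n, u n ∈ Ico (0 : ℝ) 1 := fun n => by
    have := one_div_nat_add_one_mem_Ioc n
    exact ⟨by simp only [u]; linarith [this.2], by simp only [u]; linarith [this.1]⟩
  have hulim : Tendsto u atTop (𝓝[Ico 0 1] 1) := tendsto_nhdsWithin_iff.2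
    ⟨by simpa [u] using tendsto_one_div_add_atTop_nhds_zero_nat.const_sub (1 : ℝ),
      Eventually.of_forall hu⟩
  refine ⟨fun n => γ.toFun (u n), fun n => mem_Delta.2 ⟨γ.inDisc _ (hu n), γ.toFun (u n),
    ⟨u n, hu n, rfl⟩, (dph_self _).le.trans hr⟩, γ.tends.comp hulim, hlim.comp hulim⟩

end SimpleCurve

lemma NormalAlong.apply_eq_of_tendsto {p : ℂ} {γ : SimpleCurve p} {F : ℂ → OnePoint ℂ}
    (hF : NormalAlong F γ.carrier unitDisc) {a : ℂ} (ha : ‖a‖ < 1) {L : OnePoint ℂ}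
    (hL : Tendsto (invStereo ∘ F) (𝓝[≠] a) (𝓝 (invStereo L))) : F a = L := by
  obtain ⟨v, v₀, hv, hv₀, hvlim, hne⟩ := γ.exists_seq_tendsto_ne
  obtain ⟨φ, hφ, h, H⟩ := hF v fun n => (hv n).1
  obtain ⟨R, hR, hacc⟩ := exists_frequently_phiM_phiM_neg (hvlim.comp hφ.tendsto_atTop)
    (fun n => (hv (φ n)).2) hv₀ (fun n => hne (φ n)) ha
  refine invStereo_injective (eq_of_forall_dist_le fun ε hε => ?_)
  obtain ⟨N, hN⟩ := H _ (closedBall_subset_unitDisc hR) (isCompact_closedBall 0 R) (ε / 3)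
    (by positivity)
  -- `F a = F (φ_{v_m} ζ)` and the value of `F` at a point `φ_{v_n} ζ ≠ a` near `a` are both
  -- close to `h ζ`.
  obtain ⟨x, ⟨m, hm, n, hn, hζR, rfl⟩, hxL⟩ := ((hacc N).and_eventually
    (hL.eventually (Metric.ball_mem_nhds _ (by positivity : 0 < ε / 3)))).exists
  set ζ := phiM (-v (φ m)) a
  have hζ : ζ ∈ Metric.closedBall (0 : ℂ) R := mem_closedBall_zero_iff.2 hζR
  have h₁ := hN m hm ζ hζ
  rw [phiM_phiM_neg ha (hv (φ m)).2] at h₁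
  have h₂ := hN n hn ζ hζ
  rw [sphDist_eq_dist] at h₁ h₂
  simp only [Function.comp_apply] at hxL
  linarith [dist_triangle4 (invStereo (F a)) (invStereo (h ζ)) (invStereo (F (phiM (v (φ n)) ζ)))
    (invStereo L), dist_comm (invStereo (h ζ)) (invStereo (F (phiM (v (φ n)) ζ)))]

lemma NormalAlong.exists_tendstoUniformlyOn {F : ℂ → OnePoint ℂ} {S U : Set ℂ}
    (hF : NormalAlong F S U) {w : ℕ → ℂ} (hw : ∀ n, w n ∈ S) :
    ∃ φ : ℕ → ℕ, StrictMono φ ∧ ∃ h : ℂ → OnePoint ℂ, ∀ K ⊆ U, IsCompact K →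
      TendstoUniformlyOn (fun n => invStereo ∘ F ∘ phiM (w (φ n))) (invStereo ∘ h) atTop K := by
  obtain ⟨φ, hφ, h, H⟩ := hF w hw
  refine ⟨φ, hφ, h, fun K hKU hK => Metric.tendstoUniformlyOn_iff.2 fun ε hε => ?_⟩
  obtain ⟨N, hN⟩ := H K hKU hK ε hε
  filter_upwards [eventually_ge_atTop N] with n hn z hz
  simp only [Function.comp_apply]
  rw [dist_comm, ← sphDist_eq_dist]
  exact hN n hn z hz

section toSphere

variable {f : ℂ → ℂ} {a : ℂ}

lemma toSphere_of_analyticAt (h : AnalyticAt ℂ f a) : toSphere f a = f a := by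
  simp [toSphere, h]

lemma toSphere_of_not_analyticAt (h : ¬AnalyticAt ℂ f a) : toSphere f a = ∞ := by
  simp [toSphere, h]

lemma sphHolomorphicAt_toSphere (hf : MeromorphicAt f a)
    (hpole : ¬AnalyticAt ℂ f a → meromorphicOrderAt f a < 0) : SphHolomorphicAt (toSphere f) a := by
  by_cases han : AnalyticAt ℂ f a
  · refine Or.inl ⟨f, han, ?_⟩
    filter_upwards [han.eventually_analyticAt] with z hz using toSphere_of_analyticAt hz
  have ho := hpole han
  set g := Function.update f⁻¹ a 0
  have hg : AnalyticAt ℂ g a := by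
    refine AnalyticAt.of_meromorphicOrderAt_pos ?_ (Function.update_self ..)
    rw [meromorphicOrderAt_congr (eventuallyEq_nhdsWithin_of_eqOn fun z hz =>
      Function.update_of_ne hz _ _), meromorphicOrderAt_inv]
    obtain ⟨n, hn⟩ := WithTop.ne_top_iff_exists.1 ho.ne_top
    rw [← hn] at ho ⊢
    exact_mod_cast neg_pos.2 (WithTop.coe_lt_coe.1 ho)
  refine Or.inr ⟨g, hg, eventuallyEq_nhds_of_eventuallyEq_nhdsNE ?_ ?_⟩
  · filter_upwards [hf.eventually_analyticAt,
      (meromorphicOrderAt_ne_top_iff_eventually_ne_zero hf).1 ho.ne_top, self_mem_nhdsWithin]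
      with z hz hz0 hza
    simp [toSphere_of_analyticAt hz, sphInv_coe hz0, g, Function.update_of_ne hza]
  · simp [toSphere_of_not_analyticAt han, g]

/-- `toSphere` sends a removable singularity at which `f` has the wrong value to `∞`; normality
along `γ` excludes such points. -/
lemma meromorphicOrderAt_neg_of_normalAlong {p : ℂ} {γ : SimpleCurve p}
    (hnorm : NormalAlong (toSphere f) γ.carrier unitDisc) (ha : ‖a‖ < 1) (hf : MeromorphicAt f a)
    (han : ¬AnalyticAt ℂ f a) : meromorphicOrderAt f a < 0 := by
  by_contra! h0
  obtain ⟨L, hL⟩ := tendsto_nhds_of_meromorphicOrderAt_nonneg hf h0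
  have hlim : Tendsto (invStereo ∘ toSphere f) (𝓝[≠] a) (𝓝 (invStereo L)) := by
    refine ((continuous_invStereo_coe.tendsto L).comp hL).congr' ?_
    filter_upwards [hf.eventually_analyticAt] with z hz
    simp [toSphere_of_analyticAt hz]
  have := hnorm.apply_eq_of_tendsto ha hlim
  rw [toSphere_of_not_analyticAt han] at this
  exact infty_ne_coe L this

lemma sphHolomorphicAt_toSphere_of_normalAlong {p : ℂ} {γ : SimpleCurve p}
    (hf : MeromorphicOn f unitDisc) (hnorm : NormalAlong (toSphere f) γ.carrier unitDisc)
    (ha : a ∈ unitDisc) : SphHolomorphicAt (toSphere f) a :=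
  sphHolomorphicAt_toSphere (hf a ha) (meromorphicOrderAt_neg_of_normalAlong hnorm ha (hf a ha))

end toSphere

namespace SimpleCurve

variable {p : ℂ} (γ : SimpleCurve p)

lemma exists_norm_eq_apply_eq (hp : ‖p‖ = 1) {F : ℂ → OnePoint ℂ} {c : OnePoint ℂ}
    (hlim : Tendsto (fun t => sphDist (F (γ.toFun t)) c) (𝓝[Ico 0 1] 1) (𝓝 0))
    {T : ℕ → ℝ} (hT : ∀ n, T n ∈ Ico (0 : ℝ) 1) (hT1 : Tendsto T atTop (𝓝 1))
    {h : ℂ → OnePoint ℂ} {R : ℝ} (hconv : TendstoUniformlyOn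
      (fun n => invStereo ∘ F ∘ phiM (γ.toFun (T n))) (invStereo ∘ h) atTop (Metric.closedBall 0 R))
    {s : ℝ} (hs0 : 0 ≤ s) (hsR : s ≤ R) (hs1 : s < 1)
    (hh : ContinuousOn (invStereo ∘ h) (Metric.sphere 0 s)) : ∃ ξ, ‖ξ‖ = s ∧ h ξ = c := by
  suffices hε : ∀ ε > 0, ∃ ξ ∈ Metric.sphere (0 : ℂ) s, sphDist (h ξ) c < ε by
    obtain ⟨ξ, hξ, hξc⟩ := exists_eq_of_forall_sphDist_lt (isCompact_sphere 0 s) hh hε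
    exact ⟨ξ, mem_sphere_zero_iff_norm.1 hξ, hξc⟩
  intro ε hε
  obtain ⟨t₁, ht₁, htail⟩ : ∃ t₁ < 1, Ioo t₁ 1 ⊆ {τ | sphDist (F (γ.toFun τ)) c < ε / 2} := by
    have := hlim.eventually (gt_mem_nhds (half_pos hε))
    rwa [nhdsWithin_Ico_eq_nhdsLT zero_lt_one, Filter.Eventually,
      mem_nhdsLT_iff_exists_Ioo_subset] at this
  obtain ⟨n, hn, ht₁n⟩ := ((Metric.tendstoUniformlyOn_iff.1 hconv (ε / 2) (half_pos hε)).and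
    (hT1.eventually (lt_mem_nhds ht₁))).exists
  obtain ⟨τ, hτ, hτs⟩ := γ.exists_dph_eq hp (hT n) hs0 hs1
  have hw := γ.norm_lt_one (hT n)
  have hγτ := γ.norm_lt_one ⟨(hT n).1.trans hτ.1, hτ.2⟩
  have hξ : ‖phiM (-γ.toFun (T n)) (γ.toFun τ)‖ = s := by rw [← dph_eq_norm_phiM_neg, hτs]
  refine ⟨_, mem_sphere_zero_iff_norm.2 hξ, ?_⟩
  have h₁ := hn _ (mem_closedBall_zero_iff.2 (hξ.trans_le hsR))
  simp only [Function.comp_apply, phiM_phiM_neg hγτ hw] at h₁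
  have h₂ : sphDist (F (γ.toFun τ)) c < ε / 2 := htail ⟨ht₁n.trans_le hτ.1, hτ.2⟩
  rw [sphDist_eq_dist] at h₂ ⊢
  linarith [dist_triangle (invStereo (h (phiM (-γ.toFun (T n)) (γ.toFun τ))))
    (invStereo (F (γ.toFun τ))) (invStereo c)]

theorem exists_subseq_tendsto_sphDist_of_mem_Delta (hp : ‖p‖ = 1) {F : ℂ → OnePoint ℂ}
    (hF : ∀ a ∈ unitDisc, SphHolomorphicAt F a) (hnorm : NormalAlong F γ.carrier unitDisc)
    {c : OnePoint ℂ} (hlim : Tendsto (fun t => sphDist (F (γ.toFun t)) c) (𝓝[Ico 0 1] 1) (𝓝 0))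
    {r : ℝ} (hr : r < 1) {z : ℕ → ℂ} (hzΔ : ∀ n, z n ∈ Delta r γ.carrier)
    (hz : Tendsto z atTop (𝓝 p)) :
    ∃ φ : ℕ → ℕ, StrictMono φ ∧ Tendsto (fun n => sphDist (F (z (φ n))) c) atTop (𝓝 0) := by
  choose hzD w hwγ hdph using fun n => mem_Delta.1 (hzΔ n)
  choose T hT hTw using hwγ
  obtain rfl : w = fun n => γ.toFun (T n) := funext fun n => (hTw n).symm
  have hT1 : Tendsto T atTop (𝓝 1) := γ.tendsto_one_of_tendsto hp hT
    (tendsto_of_dph_le hp hz hzD (fun n => γ.norm_lt_one (hT n)) hr hdph)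
  obtain ⟨φ, hφ, h, hconv⟩ := hnorm.exists_tendstoUniformlyOn fun n => ⟨T n, hT n, rfl⟩
  have hr0 : 0 ≤ r := (dph_nonneg _ _).trans (hdph 0)
  set R := (1 + r) / 2
  have hrR : r < R := by simp only [R]; linarith
  have hR1 : R < 1 := by simp only [R]; linarith
  have hR0 : 0 < R := hr0.trans_lt hrR
  have hK := hconv _ (closedBall_subset_unitDisc hR1) (isCompact_closedBall 0 R)
  have hhol : ∀ ζ ∈ Metric.ball (0 : ℂ) R, SphHolomorphicAt h ζ := fun ζ hζ =>
    sphHolomorphicAt_of_tendstoUniformlyOn Metric.isOpen_ball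
      (hK.mono Metric.ball_subset_closedBall)
      (fun n ζ hζ => by
        have hζ1 : ‖ζ‖ < 1 := (mem_ball_zero_iff.1 hζ).trans hR1
        have hw := γ.norm_lt_one (hT (φ n))
        exact (hF _ (norm_phiM_lt_one hζ1 hw)).comp (analyticAt_phiM hζ1 hw)) hζ
  have hcirc : ∀ s ∈ Ioo 0 R, ∃ ξ, ‖ξ‖ = s ∧ h ξ = c := fun s hs =>
    γ.exists_norm_eq_apply_eq hp hlim (fun n => hT (φ n)) (hT1.comp hφ.tendsto_atTop) hK hs.1.le
      hs.2.le (hs.2.trans hR1) fun ξ hξ => (hhol ξ (mem_ball_zero_iff.2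
        ((mem_sphere_zero_iff_norm.1 hξ).trans_lt hs.2))).continuousAt.continuousWithinAt
  have hc : ∀ ζ ∈ Metric.ball (0 : ℂ) R, h ζ = c :=
    eqOn_of_sphHolomorphicAt_of_frequently_eq (convex_ball 0 R).isPreconnected hhol
      (Metric.mem_ball_self hR0) (frequently_nhdsNE_zero_of_forall_norm_eq hR0 hcirc)
  refine ⟨φ, hφ, tendsto_order.2 ⟨fun a ha => Eventually.of_forall fun n =>
    ha.trans_le (sphDist_nonneg _ _), fun ε hε => ?_⟩⟩
  filter_upwards [Metric.tendstoUniformlyOn_iff.1 hK ε hε] with n hn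
  set ζ := phiM (-γ.toFun (T (φ n))) (z (φ n))
  have hζ : ‖ζ‖ ≤ r := by rw [← dph_eq_norm_phiM_neg]; exact hdph _
  have := hn ζ (mem_closedBall_zero_iff.2 (hζ.trans hrR.le))
  rwa [Function.comp_apply, Function.comp_apply, Function.comp_apply,
    phiM_phiM_neg (hzD _) (γ.norm_lt_one (hT _)), hc ζ (mem_ball_zero_iff.2 (hζ.trans_lt hrR)),
    dist_comm, ← sphDist_eq_dist] at this

end SimpleCurve

theorem stmt_14 (θ : ℝ) (γ : SimpleCurve (Complex.exp (θ * Complex.I)))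
    (f : ℂ → ℂ) (hf : MeromorphicOn f unitDisc) (c : OnePoint ℂ)
    (hnorm : NormalAlong (toSphere f) γ.carrier unitDisc)
    (hlim : Filter.Tendsto (fun t => sphDist (toSphere f (γ.toFun t)) c)
      (nhdsWithin 1 (Set.Ico 0 1)) (nhds 0)) :
    ∀ r : ℝ, 0 < r → r < 1 →
      clusterSet (toSphere f) (Delta r γ.carrier) (Complex.exp (θ * Complex.I)) = {c} := by
  intro r hr0 hr1
  have hF : ∀ a ∈ unitDisc, SphHolomorphicAt (toSphere f) a := fun a ha =>
    sphHolomorphicAt_toSphere_of_normalAlong hf hnorm ha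
  refine eq_singleton_iff_unique_mem.2 ⟨γ.mem_clusterSet hlim hr0.le, ?_⟩
  rintro c' ⟨z, hzΔ, hz, hc'⟩
  obtain ⟨φ, hφ, hc⟩ := γ.exists_subseq_tendsto_sphDist_of_mem_Delta (norm_exp_ofReal_mul_I θ) hF
    hnorm hlim hr1 hzΔ hz
  exact eq_of_tendsto_sphDist (hc'.comp hφ.tendsto_atTop) hc

end
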